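/- For every n ∈ ℕ one has 1/[n+1]_q = ((−1)^n/[n]_q!) · Σ_{k=0}^n s_1(n,k,q) β_{k,q}. (Theorem 3, second assertion, with signs and powers of q made consistent with the signed definition of s_1 and the corrected value (−1)^n q^{n−C(n+1,2)}/[n+1]_q of ∫ binom(x,n)_q dμ_q.) -/

import Mathlib

/-!
Let `L` be the linear functional on `K[T]` with `L(T^k) = β_k`. Carlitz's recursion says exactly
that `q L(f(qT+1)) - L(f) = (q-1) f(0) + f'(0)` for every polynomial `f`. The q-falling factorial
`P_n = ∏_{j<n} (T - [j]_q)`, whose coefficients are the `s_1(n,k,q)`, satisfies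
`P_{n+1}(qT+1) = q^n (qT+1) P_n(T)`, so the functional equation applied to `P_{n+1}` is a
first-order recurrence for `L(P_n)`, solved by `L(P_n) = (-1)^n [n]_q! / [n+1]_q`.
The sum in the theorem is `L(P_n)`.
-/

/-- The q-analogue `[n]_q = (1 - q^n)/(1 - q)` of a natural number. -/
def qnum {K : Type*} [Field K] (q : K) (n : ℕ) : K := (1 - q ^ n) / (1 - q)

/-- The q-factorial `[n]_q! = ∏_{j=1}^n [j]_q`. -/
def qfact {K : Type*} [Field K] (q : K) (n : ℕ) : K :=
  ∏ j ∈ Finset.range n, qnum q (j + 1)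

/-- The Gaussian binomial coefficient, `0` for `k > n`. -/
def qbinom {K : Type*} [Field K] (q : K) (n k : ℕ) : K :=
  if k ≤ n then qfact q n / (qfact q k * qfact q (n - k)) else 0

/-- The q-Stirling number of the first kind: the coefficient of `T^k` in
`∏_{j=0}^{n-1} (T - [j]_q)`. -/
noncomputable def qStirling1 {K : Type*} [Field K] (q : K) (n k : ℕ) : K :=
  (∏ j ∈ Finset.range n, (Polynomial.X - Polynomial.C (qnum q j))).coeff k

open Polynomial Finset

section Umbral

variable {R : Type*} [CommRing R]

noncomputable def umbral (β : ℕ → R) : R[X] →ₗ[R] R :=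
  lsum fun k => LinearMap.mulRight R (β k)

lemma umbral_monomial (β : ℕ → R) (k : ℕ) (a : R) : umbral β (monomial k a) = a * β k := by
  simp [umbral]

lemma umbral_eq_sum_range (β : ℕ → R) {f : R[X]} {N : ℕ} (hf : f.natDegree < N) :
    umbral β f = ∑ k ∈ range N, f.coeff k * β k :=
  sum_over_range' (f := fun k a => a * β k) f (fun _ => zero_mul _) N hf

lemma umbral_C_mul (β : ℕ → R) (a : R) (f : R[X]) : umbral β (C a * f) = a * umbral β f := by
  rw [← smul_eq_C_mul, map_smul, smul_eq_mul]

lemma umbral_qX_add_one_pow (β : ℕ → R) (q : R) (k : ℕ) :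
    umbral β ((C q * X + 1) ^ k) = ∑ i ∈ range (k + 1), (k.choose i : R) * q ^ i * β i := by
  simp only [add_pow, one_pow, mul_one, mul_pow, ← C_pow, map_sum]
  refine sum_congr rfl fun i _ => ?_
  rw [← C_eq_natCast, mul_right_comm, ← C_mul, C_mul_X_pow_eq_monomial,
    umbral_monomial]
  ring

def IsCarlitzBernoulli (q : R) (β : ℕ → R) : Prop :=
  β 0 = 1 ∧ ∀ k : ℕ, 1 ≤ k →
    q * ∑ i ∈ range (k + 1), (k.choose i : R) * q ^ i * β i - β k = if k = 1 then 1 else 0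

lemma IsCarlitzBernoulli.umbral_comp {q : R} {β : ℕ → R} (hβ : IsCarlitzBernoulli q β)
    (f : R[X]) :
    q * umbral β (f.comp (C q * X + 1)) - umbral β f = (q - 1) * f.coeff 0 + f.coeff 1 := by
  induction f using Polynomial.induction_on' with
  | add f g hf hg =>
    simp only [add_comp, map_add, coeff_add]
    linear_combination hf + hg
  | monomial k a =>
    rw [← C_mul_X_pow_eq_monomial, mul_comp, C_comp, X_pow_comp, umbral_C_mul, umbral_C_mul,
      ← monomial_one_right_eq_X_pow, umbral_monomial, umbral_qX_add_one_pow, coeff_C_mul,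
      coeff_C_mul, coeff_monomial, coeff_monomial]
    rcases Nat.eq_zero_or_pos k with rfl | hk
    · simp [hβ.1, sub_one_mul]
    · have := hβ.2 k hk
      split_ifs at this ⊢ <;> first | omega | linear_combination a * this

end Umbral

section QAnalogues

variable {K : Type*} [Field K] {q : K}

@[simp]
lemma qnum_zero (q : K) : qnum q 0 = 0 := by simp [qnum]

lemma qnum_succ (hq : q ≠ 1) (j : ℕ) : qnum q (j + 1) = q * qnum q j + 1 := by
  have : 1 - q ≠ 0 := sub_ne_zero.mpr hq.symm
  simp only [qnum]
  field_simp
  ring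

lemma qnum_ne_zero {n : ℕ} (hn : q ^ n ≠ 1) : qnum q n ≠ 0 := by
  have hq : q ≠ 1 := by rintro rfl; exact hn (one_pow n)
  exact div_ne_zero (sub_ne_zero.mpr hn.symm) (sub_ne_zero.mpr hq.symm)

lemma qfact_succ (q : K) (n : ℕ) : qfact q (n + 1) = qfact q n * qnum q (n + 1) :=
  prod_range_succ _ _

lemma qfact_ne_zero (hq : ∀ n : ℕ, 1 ≤ n → q ^ n ≠ 1) (n : ℕ) : qfact q n ≠ 0 :=
  prod_ne_zero_iff.mpr fun j _ => qnum_ne_zero (hq (j + 1) j.succ_pos)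

noncomputable def qFallingFactorial (q : K) (n : ℕ) : K[X] :=
  ∏ j ∈ range n, (X - C (qnum q j))

lemma qFallingFactorial_succ (q : K) (n : ℕ) :
    qFallingFactorial q (n + 1) = qFallingFactorial q n * (X - C (qnum q n)) :=
  prod_range_succ _ _

lemma natDegree_qFallingFactorial_le (q : K) (n : ℕ) : (qFallingFactorial q n).natDegree ≤ n :=
  (natDegree_prod_le _ _).trans (by simp)

lemma qFallingFactorial_succ_eq_X_mul (q : K) (n : ℕ) :
    qFallingFactorial q (n + 1) = X * ∏ j ∈ range n, (X - C (qnum q (j + 1))) := by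
  rw [qFallingFactorial, prod_range_succ', qnum_zero, C_0, sub_zero, mul_comm]

lemma coeff_zero_qFallingFactorial_succ (q : K) (n : ℕ) :
    (qFallingFactorial q (n + 1)).coeff 0 = 0 := by
  rw [qFallingFactorial_succ_eq_X_mul, coeff_X_mul_zero]

lemma coeff_one_qFallingFactorial_succ (q : K) (n : ℕ) :
    (qFallingFactorial q (n + 1)).coeff 1 = (-1) ^ n * qfact q n := by
  rw [qFallingFactorial_succ_eq_X_mul, coeff_X_mul, coeff_zero_eq_eval_zero, eval_prod]
  simp [prod_neg, qfact]

/-- `[j+1]_q = q [j]_q + 1` makes `T ↦ qT + 1` shift the roots `[j]_q` of the falling factorial. -/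
lemma qFallingFactorial_succ_comp (hq : q ≠ 1) (n : ℕ) :
    (qFallingFactorial q (n + 1)).comp (C q * X + 1) =
      C (q ^ n) * ((C q * X + 1) * qFallingFactorial q n) := by
  induction n with
  | zero => simp [qFallingFactorial]
  | succ n ih =>
    rw [qFallingFactorial_succ, mul_comp, ih, sub_comp, X_comp, C_comp, qnum_succ hq,
      qFallingFactorial_succ, pow_succ]
    simp only [C_mul, C_add, C_1]
    ring

end QAnalogues

section Evaluation

variable {K : Type*} [Field K] {q : K} {β : ℕ → K}

lemma IsCarlitzBernoulli.umbral_qFallingFactorial_succ (hβ : IsCarlitzBernoulli q β)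
    (hq : q ≠ 1) (n : ℕ) :
    (q ^ (n + 2) - 1) * umbral β (qFallingFactorial q (n + 1)) +
        q ^ (n + 1) * qnum q (n + 1) * umbral β (qFallingFactorial q n) =
      (-1) ^ n * qfact q n := by
  have hX : X * qFallingFactorial q n =
      qFallingFactorial q (n + 1) + C (qnum q n) * qFallingFactorial q n := by
    rw [qFallingFactorial_succ]
    ring
  have key := hβ.umbral_comp (qFallingFactorial q (n + 1))
  rw [qFallingFactorial_succ_comp hq, coeff_zero_qFallingFactorial_succ,
    coeff_one_qFallingFactorial_succ, add_mul, mul_assoc, one_mul, hX] at key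
  simp only [mul_add, map_add, umbral_C_mul] at key
  rw [qnum_succ hq]
  linear_combination key

/-- The umbral form of the paper's `∫ binom(x,n)_q dμ_q = (-1)^n q^{n - C(n+1,2)} / [n+1]_q`. -/
lemma IsCarlitzBernoulli.umbral_qFallingFactorial (hβ : IsCarlitzBernoulli q β)
    (hq : ∀ n : ℕ, 1 ≤ n → q ^ n ≠ 1) (n : ℕ) :
    umbral β (qFallingFactorial q n) = (-1) ^ n * qfact q n / qnum q (n + 1) := by
  have hq1 : q ≠ 1 := by simpa using hq 1 le_rfl
  induction n with
  | zero =>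
    rw [qFallingFactorial, prod_range_zero, ← monomial_zero_one, umbral_monomial, hβ.1]
    simp [qfact, qnum, div_self (sub_ne_zero.mpr hq1.symm)]
  | succ n ih =>
    have recurrence := hβ.umbral_qFallingFactorial_succ hq1 n
    have hqn : qnum q (n + 1) ≠ 0 := qnum_ne_zero (hq (n + 1) n.succ_pos)
    rw [ih, mul_assoc, mul_div_cancel₀ _ hqn] at recurrence
    rw [eq_div_iff (qnum_ne_zero (hq (n + 2) (by omega))), qfact_succ]
    simp only [qnum]
    linear_combination (-1 / (1 - q)) * recurrence

end Evaluation

theorem one_div_qnum_succ_eq_sum_qStirling1_mul_qBernoulli_general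
    {K : Type*} [Field K] (q : K)
    (hq : ∀ n : ℕ, 1 ≤ n → q ^ n ≠ 1)
    (β : ℕ → K) (hβ0 : β 0 = 1)
    (hβ : ∀ k : ℕ, 1 ≤ k →
      q * ∑ i ∈ Finset.range (k + 1), (Nat.choose k i : K) * q ^ i * β i - β k =
        if k = 1 then 1 else 0)
    (n : ℕ) :
    1 / qnum q (n + 1) = ((-1 : K) ^ n / qfact q n) *
      ∑ k ∈ Finset.range (n + 1), qStirling1 q n k * β k := by
  have hsum : ∑ k ∈ range (n + 1), qStirling1 q n k * β k = umbral β (qFallingFactorial q n) :=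
    (umbral_eq_sum_range β (Nat.lt_succ_of_le (natDegree_qFallingFactorial_le q n))).symm
  rw [hsum, IsCarlitzBernoulli.umbral_qFallingFactorial ⟨hβ0, hβ⟩ hq]
  have hfact := qfact_ne_zero hq n
  field_simp
  rw [← pow_mul, pow_mul', neg_one_sq, one_pow]

/-- **Theorem 3, second assertion** (signs corrected): for the Carlitz q-Bernoulli
numbers `β_k`, one has `1/[n+1]_q = ((-1)^n/[n]_q!) Σ_{k=0}^n s_1(n,k,q) β_k`. -/
theorem one_div_qnum_succ_eq_sum_qStirling1_mul_qBernoulli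
    {K : Type*} [Field K] [CharZero K] (q : K) (hq0 : q ≠ 0)
    (hq : ∀ n : ℕ, 1 ≤ n → q ^ n ≠ 1)
    (β : ℕ → K) (hβ0 : β 0 = 1)
    (hβ : ∀ k : ℕ, 1 ≤ k →
      q * ∑ i ∈ Finset.range (k + 1), (Nat.choose k i : K) * q ^ i * β i - β k =
        if k = 1 then 1 else 0)
    (n : ℕ) :
    1 / qnum q (n + 1) = ((-1 : K) ^ n / qfact q n) *
      ∑ k ∈ Finset.range (n + 1), qStirling1 q n k * β k :=
  one_div_qnum_succ_eq_sum_qStirling1_mul_qBernoulli_general q hq β hβ0 hβ n
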